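/- arXiv:1908.02620 — 4 statements merged into one kernel-verified Lean document; each statement's English description precedes it below -/
import Mathlib

section
/- Let H, W, B, K, H', W' be positive natural numbers with H' = H − K + 1 and W' = W − K + 1. Let δ : Fin H × Fin W × Fin B → ℝ and let 𝒲 : Fin K × Fin K → ℝ be a kernel. Define the (valid, per-batch-element, two-dimensional) convolution C : Fin H' × Fin W' × Fin B → ℝ by C(p₁, p₂, b) = ∑_{u∈Fin K} ∑_{v∈Fin K} δ(p₁+u, p₂+v, b) · 𝒲(u, v). Then ∑_{p₁,p₂,b} C(p₁,p₂,b)² ≤ K² · (∑_{u,v} 𝒲(u,v)²) · (∑_{h,w,b} δ(h,w,b)²), i.e. ‖δ ∗ 𝒲‖₂² ≤ K² ‖𝒲‖₂² ‖δ‖₂². -/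
/-!
Each output entry of the convolution is the inner product of a `K × K` patch of `δ` with `𝒲`, so by
Cauchy–Schwarz its square is at most `‖𝒲‖₂²` times the squared norm of the patch. Summing over the
outputs and exchanging the sums, every kernel offset `(u, v)` contributes the squared norm of `δ`
read through the injective shift `p ↦ p + (u, v)`, which is at most `‖δ‖₂²`; there are `K²` offsets.
-/

open Finset Function

section

variable {ι P X M : Type*} [Fintype ι] [Fintype P] [Fintype X]

theorem sum_comp_le_sum_of_injective [AddCommMonoid M] [Preorder M] [AddLeftMono M]
    {f : X → M} (hf : ∀ x, 0 ≤ f x) {e : P → X} (he : Injective e) :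
    ∑ p, f (e p) ≤ ∑ x, f x :=
  (sum_map univ ⟨e, he⟩ f).symm.le.trans (sum_le_univ_sum_of_nonneg hf)

variable {R : Type*} [CommSemiring R] [LinearOrder R] [IsStrictOrderedRing R]
    [ExistsAddOfLE R]

theorem sum_sq_sum_comp_mul_le_card_mul (shift : ι → P → X) (hshift : ∀ i, Injective (shift i))
    (δ : X → R) (w : ι → R) :
    ∑ p, (∑ i, δ (shift i p) * w i) ^ 2
      ≤ Fintype.card ι * (∑ i, w i ^ 2) * ∑ x, δ x ^ 2 :=
  calc ∑ p, (∑ i, δ (shift i p) * w i) ^ 2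
      ≤ ∑ p, (∑ i, δ (shift i p) ^ 2) * ∑ i, w i ^ 2 :=
        sum_le_sum fun p _ ↦ sum_mul_sq_le_sq_mul_sq _ _ _
    _ = (∑ i, ∑ p, δ (shift i p) ^ 2) * ∑ i, w i ^ 2 := by rw [← sum_mul, sum_comm]
    _ ≤ (∑ _i : ι, ∑ x, δ x ^ 2) * ∑ i, w i ^ 2 :=
        mul_le_mul_of_nonneg_right
          (sum_le_sum fun i _ ↦ sum_comp_le_sum_of_injective (fun x ↦ sq_nonneg _) (hshift i))
          (sum_nonneg fun i _ ↦ sq_nonneg (w i))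
    _ = Fintype.card ι * (∑ i, w i ^ 2) * ∑ x, δ x ^ 2 := by
        rw [sum_const, card_univ, nsmul_eq_mul]; ring

end

def windowIndex {n m K : ℕ} (h : m + K ≤ n + 1) (u : Fin K) (p : Fin m) : Fin n :=
  ⟨p + u, by omega⟩

theorem windowIndex_injective {n m K : ℕ} (h : m + K ≤ n + 1) (u : Fin K) :
    Injective (windowIndex h u) := fun p q hpq ↦ by
  simpa [windowIndex, Fin.ext_iff] using hpq

/-- The squared L₂ norm of a valid 2-D convolution (applied per batch element) is bounded by
`K² ‖𝒲‖₂² ‖δ‖₂²`. -/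
theorem conv2d_sq_norm_le
    (H W B K H' W' : ℕ) (hKH : K ≤ H) (hKW : K ≤ W)
    (hH' : H' = H - K + 1) (hW' : W' = W - K + 1)
    (δ : Fin H × Fin W × Fin B → ℝ) (𝒲 : Fin K × Fin K → ℝ)
    (C : Fin H' × Fin W' × Fin B → ℝ)
    (hC : ∀ (p₁ : Fin H') (p₂ : Fin W') (b : Fin B),
      C (p₁, p₂, b) = ∑ u : Fin K, ∑ v : Fin K,
        δ (⟨p₁.val + u.val, by have := p₁.isLt; have := u.isLt; omega⟩,
           ⟨p₂.val + v.val, by have := p₂.isLt; have := v.isLt; omega⟩, b) * 𝒲 (u, v)) :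
    ∑ p : Fin H' × Fin W' × Fin B, (C p) ^ 2
      ≤ (K : ℝ) ^ 2 * (∑ uv : Fin K × Fin K, (𝒲 uv) ^ 2)
          * (∑ x : Fin H × Fin W × Fin B, (δ x) ^ 2) := by
  have hH : H' + K ≤ H + 1 := by omega
  have hW : W' + K ≤ W + 1 := by omega
  let shift (uv : Fin K × Fin K) : Fin H' × Fin W' × Fin B → Fin H × Fin W × Fin B :=
    Prod.map (windowIndex hH uv.1) (Prod.map (windowIndex hW uv.2) id)
  have hC' : C = fun p ↦ ∑ uv, δ (shift uv p) * 𝒲 uv := by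
    funext ⟨p₁, p₂, b⟩
    rw [hC, Fintype.sum_prod_type]
    rfl
  have hshift (uv : Fin K × Fin K) : Injective (shift uv) :=
    (windowIndex_injective hH uv.1).prodMap ((windowIndex_injective hW uv.2).prodMap injective_id)
  simpa only [hC', Fintype.card_prod, Fintype.card_fin, ← sq, Nat.cast_pow]
    using sum_sq_sum_comp_mul_le_card_mul shift hshift δ 𝒲
end

section
/- Let H, W, B, K, H', W', C be positive natural numbers with H' = H − K + 1 and W' = W − K + 1. Let N : Fin C → (Fin H × Fin W × Fin B → ℝ) be a family of input feature channels, let 𝒲 : Fin C → (Fin K × Fin K → ℝ) be the corresponding kernels, and let h : ℝ → ℝ. Define the output channel A : Fin H' × Fin W' × Fin B → ℝ by A(p₁,p₂,b) = ∑_{c∈Fin C} ∑_{u,v∈Fin K} h(N(c)(p₁+u, p₂+v, b)) · 𝒲(c)(u,v). Fix distinct indices i ≠ j in Fin C and define the pruned output A_p : Fin H' × Fin W' × Fin B → ℝ by A_p(p₁,p₂,b) = ∑_{u,v} h(N(j)(p₁+u, p₂+v, b)) · (𝒲(i)(u,v) + 𝒲(j)(u,v)) + ∑_{c ≠ i, j}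 ∑_{u,v} h(N(c)(p₁+u, p₂+v, b)) · 𝒲(c)(u,v). Then for every (p₁,p₂,b), A(p₁,p₂,b) − A_p(p₁,p₂,b) = ∑_{u,v} (h(N(i)(p₁+u, p₂+v, b)) − h(N(j)(p₁+u, p₂+v, b))) · 𝒲(i)(u,v); consequently, with n' = H'·W'·B, (1/n') ∑_{p₁,p₂,b} (A(p₁,p₂,b) − A_p(p₁,p₂,b))² = (1/n') ‖(h∘N(i) − h∘N(j)) ∗ 𝒲(i)‖₂². -/
/-!
Merging the kernel of channel `i` into that of channel `j` removes the terms `N i ∗ 𝒲 i` and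
adds `N j ∗ 𝒲 i`; every other channel contributes identically to both outputs. Since valid
convolution is bilinear in the signal and the kernel, the shift is `(h∘N i − h∘N j) ∗ 𝒲 i`.
-/

open Finset

section ValidConv

variable {R : Type*} [CommRing R] {H W B K H' W' : ℕ}

/-- The paper's `x ∗ w`: convolution in the deep-learning sense (no kernel flip), per batch
element. -/
def validConv (hH : H' + K ≤ H + 1) (hW : W' + K ≤ W + 1) (x : Fin H × Fin W × Fin B → R)
    (w : Fin K × Fin K → R) : Fin H' × Fin W' × Fin B → R :=
  fun p => ∑ u : Fin K, ∑ v : Fin K,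
    x (⟨p.1 + u, by omega⟩, ⟨p.2.1 + v, by omega⟩, p.2.2) * w (u, v)

variable (hH : H' + K ≤ H + 1) (hW : W' + K ≤ W + 1)

theorem validConv_add_right (x : Fin H × Fin W × Fin B → R) (w w' : Fin K × Fin K → R) :
    validConv hH hW x (w + w') = validConv hH hW x w + validConv hH hW x w' := by
  ext p
  simp only [validConv, Pi.add_apply, mul_add, sum_add_distrib]

theorem validConv_sub_left (x y : Fin H × Fin W × Fin B → R) (w : Fin K × Fin K → R) :
    validConv hH hW (x - y) w = validConv hH hW x w - validConv hH hW y w := by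
  ext p
  simp only [validConv, Pi.sub_apply, sub_mul, sum_sub_distrib]

theorem sum_validConv_sub_merge {ι : Type*} [Fintype ι] [DecidableEq ι]
    (x : ι → Fin H × Fin W × Fin B → R) (w : ι → Fin K × Fin K → R) {i j : ι} (hij : i ≠ j) :
    ∑ c, validConv hH hW (x c) (w c)
        - (validConv hH hW (x j) (w i + w j) + ∑ c ∈ univ \ {i, j}, validConv hH hW (x c) (w c))
      = validConv hH hW (x i - x j) (w i) := by
  rw [← sum_sdiff (subset_univ {i, j}), sum_pair hij, validConv_add_right, validConv_sub_left]
  abel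

end ValidConv

/-- **Equation 7.** Pruning channel `N i` and absorbing its kernel `𝒲 i` into the kernel of a
substitute channel `N j` shifts the next layer's output by exactly the valid convolution of
`h ∘ N i − h ∘ N j` with `𝒲 i`; consequently the normalized squared L₂ shift equals
`(1/n') ‖(h∘N i − h∘N j) ∗ 𝒲 i‖₂²`. -/
theorem pruned_output_shift_eq_conv
    (H W B K H' W' C : ℕ) (hKH : K ≤ H) (hKW : K ≤ W)
    (hH' : H' = H - K + 1) (hW' : W' = W - K + 1)
    (N : Fin C → (Fin H × Fin W × Fin B → ℝ))
    (𝒲 : Fin C → (Fin K × Fin K → ℝ))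
    (h : ℝ → ℝ) (i j : Fin C) (hij : i ≠ j)
    (A Ap : Fin H' × Fin W' × Fin B → ℝ)
    (hA : ∀ (p₁ : Fin H') (p₂ : Fin W') (b : Fin B),
      A (p₁, p₂, b) = ∑ c : Fin C, ∑ u : Fin K, ∑ v : Fin K,
        h (N c (⟨p₁.val + u.val, by have := p₁.isLt; have := u.isLt; omega⟩,
                ⟨p₂.val + v.val, by have := p₂.isLt; have := v.isLt; omega⟩, b)) * 𝒲 c (u, v))
    (hAp : ∀ (p₁ : Fin H') (p₂ : Fin W') (b : Fin B),
      Ap (p₁, p₂, b) =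
        (∑ u : Fin K, ∑ v : Fin K,
          h (N j (⟨p₁.val + u.val, by have := p₁.isLt; have := u.isLt; omega⟩,
                  ⟨p₂.val + v.val, by have := p₂.isLt; have := v.isLt; omega⟩, b))
            * (𝒲 i (u, v) + 𝒲 j (u, v)))
        + ∑ c ∈ Finset.univ \ {i, j}, ∑ u : Fin K, ∑ v : Fin K,
            h (N c (⟨p₁.val + u.val, by have := p₁.isLt; have := u.isLt; omega⟩,
                    ⟨p₂.val + v.val, by have := p₂.isLt; have := v.isLt; omega⟩, b))
              * 𝒲 c (u, v)) :
    (∀ (p₁ : Fin H') (p₂ : Fin W') (b : Fin B),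
      A (p₁, p₂, b) - Ap (p₁, p₂, b)
        = ∑ u : Fin K, ∑ v : Fin K,
            (h (N i (⟨p₁.val + u.val, by have := p₁.isLt; have := u.isLt; omega⟩,
                     ⟨p₂.val + v.val, by have := p₂.isLt; have := v.isLt; omega⟩, b))
              - h (N j (⟨p₁.val + u.val, by have := p₁.isLt; have := u.isLt; omega⟩,
                        ⟨p₂.val + v.val, by have := p₂.isLt; have := v.isLt; omega⟩, b)))
              * 𝒲 i (u, v)) ∧
    (1 / (H' * W' * B : ℝ)) * ∑ p : Fin H' × Fin W' × Fin B, (A p - Ap p) ^ 2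
      = (1 / (H' * W' * B : ℝ)) * ∑ p : Fin H' × Fin W' × Fin B,
          (∑ u : Fin K, ∑ v : Fin K,
            (h (N i (⟨p.1.val + u.val, by have := p.1.isLt; have := u.isLt; omega⟩,
                     ⟨p.2.1.val + v.val, by have := p.2.1.isLt; have := v.isLt; omega⟩, p.2.2))
              - h (N j (⟨p.1.val + u.val, by have := p.1.isLt; have := u.isLt; omega⟩,
                        ⟨p.2.1.val + v.val, by have := p.2.1.isLt; have := v.isLt; omega⟩, p.2.2)))
              * 𝒲 i (u, v)) ^ 2 := by
  have hKH' : H' + K ≤ H + 1 := by omega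
  have hKW' : W' + K ≤ W + 1 := by omega
  have hA' : A = ∑ c, validConv hKH' hKW' (h ∘ N c) (𝒲 c) := by
    ext ⟨p₁, p₂, b⟩
    rw [hA, Finset.sum_apply]
    rfl
  have hAp' : Ap = validConv hKH' hKW' (h ∘ N j) (𝒲 i + 𝒲 j)
      + ∑ c ∈ univ \ {i, j}, validConv hKH' hKW' (h ∘ N c) (𝒲 c) := by
    ext ⟨p₁, p₂, b⟩
    rw [hAp, Pi.add_apply, Finset.sum_apply]
    rfl
  have shift : A - Ap = validConv hKH' hKW' (h ∘ N i - h ∘ N j) (𝒲 i) := by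
    rw [hA', hAp', sum_validConv_sub_merge _ _ (fun c => h ∘ N c) 𝒲 hij]
  refine ⟨fun p₁ p₂ b => congrFun shift (p₁, p₂, b), ?_⟩
  congr 1
  exact sum_congr rfl fun p _ => by rw [← Pi.sub_apply A Ap, shift]; rfl
end

section
/- Let H, W, B, K, H', W' be positive natural numbers with H' = H − K + 1 and W' = W − K + 1, and set n = H·W·B and n' = H'·W'·B. Let N_i, N_j : Fin H × Fin W × Fin B → ℝ be two feature channels, let 𝒲 : Fin K × Fin K → ℝ be a kernel, and let h : ℝ → ℝ satisfy (h(x) − h(y))² ≤ (x − y)² for all x, y ∈ ℝ. Define the valid per-batch convolution (δ ∗ 𝒲)(p₁,p₂,b) = ∑_{u,v∈Fin K} δ(p₁+u, p₂+v, b)·𝒲(u,v) and the channel distance Dist(X, Y) = (1/n) ∑_{h,w,b} (X(h,w,b) − Y(h,w,b))². Then (1/n') ∑_{p₁,p₂,b} ((h∘N_i − h∘N_j) ∗ 𝒲)(p₁,p₂,b)² ≤ (n/n') · K² · (∑_{u,v} 𝒲(u,v)²) · Dist(N_i, N_j), i.e. the normalized squared norm of the distance shift is at most λ · Dist(N_i,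 N_j) where λ = (n/n')·K²·‖𝒲‖₂². -/
open Finset

/-- Per-channel bound of **Proposition 2**: the normalized squared L₂ norm of the distance
shift `(1/n') ‖(h∘N_i − h∘N_j) ∗ 𝒲‖₂²` is at most `λ · Dist(N_i, N_j)` with
`λ = (n/n') · K² · ‖𝒲‖₂²`, for any activation `h` satisfying `(h x − h y)² ≤ (x − y)²`. -/
theorem conv_shift_le_lambda_dist
    (H W B K H' W' : ℕ) (hH : 0 < H) (hW : 0 < W) (hB : 0 < B) (hK : 0 < K)
    (hH'pos : 0 < H') (hW'pos : 0 < W') (hKH : K ≤ H) (hKW : K ≤ W)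
    (hH' : H' = H - K + 1) (hW' : W' = W - K + 1)
    (Ni Nj : Fin H × Fin W × Fin B → ℝ) (𝒲 : Fin K × Fin K → ℝ)
    (h : ℝ → ℝ) (hcontr : ∀ x y : ℝ, (h x - h y) ^ 2 ≤ (x - y) ^ 2) :
    (1 / (H' * W' * B : ℝ)) * ∑ p : Fin H' × Fin W' × Fin B,
        (∑ u : Fin K, ∑ v : Fin K,
          (h (Ni (⟨p.1.val + u.val, by have := p.1.isLt; have := u.isLt; omega⟩,
                  ⟨p.2.1.val + v.val, by have := p.2.1.isLt; have := v.isLt; omega⟩, p.2.2))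
            - h (Nj (⟨p.1.val + u.val, by have := p.1.isLt; have := u.isLt; omega⟩,
                     ⟨p.2.1.val + v.val, by have := p.2.1.isLt; have := v.isLt; omega⟩, p.2.2)))
            * 𝒲 (u, v)) ^ 2
      ≤ ((H * W * B : ℝ) / (H' * W' * B : ℝ)) * (K : ℝ) ^ 2
          * (∑ uv : Fin K × Fin K, (𝒲 uv) ^ 2)
          * ((1 / (H * W * B : ℝ)) * ∑ x : Fin H × Fin W × Fin B, (Ni x - Nj x) ^ 2) := by
  have hφlt1 : ∀ (p : Fin H' × Fin W' × Fin B) (u : Fin K), p.1.val + u.val < H := by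
    intro p u; have := p.1.isLt; have := u.isLt; omega
  have hφlt2 : ∀ (p : Fin H' × Fin W' × Fin B) (v : Fin K), p.2.1.val + v.val < W := by
    intro p v; have := p.2.1.isLt; have := v.isLt; omega
  set δ : Fin H × Fin W × Fin B → ℝ := fun x => h (Ni x) - h (Nj x) with hδ
  set g : Fin H × Fin W × Fin B → ℝ := fun x => (Ni x - Nj x) ^ 2 with hg
  set φ : Fin K → Fin K → (Fin H' × Fin W' × Fin B) → (Fin H × Fin W × Fin B) :=
    fun u v p => (⟨p.1.val + u.val, hφlt1 p u⟩, ⟨p.2.1.val + v.val, hφlt2 p v⟩, p.2.2) with hφ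
  have hφinj : ∀ u v, Function.Injective (φ u v) := by
    intro u v p q hpq
    simp only [hφ, Prod.mk.injEq, Fin.mk.injEq] at hpq
    have : p.1 = q.1 := Fin.ext (by omega)
    have : p.2.1 = q.2.1 := Fin.ext (by omega)
    exact Prod.ext ‹p.1 = q.1› (Prod.ext ‹p.2.1 = q.2.1› hpq.2.2)
  have hgnn : ∀ x, 0 ≤ g x := fun x => sq_nonneg _
  have hSW : 0 ≤ ∑ uv : Fin K × Fin K, 𝒲 uv ^ 2 := Finset.sum_nonneg fun _ _ => sq_nonneg _
  have hn'pos : (0:ℝ) < (H' * W' * B : ℝ) := by positivity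
  have hnpos : (0:ℝ) < (H * W * B : ℝ) := by positivity
  -- counting: for fixed u v, sum over p of g∘φ ≤ sum over all x of g
  have count : ∀ u v, (∑ p : Fin H' × Fin W' × Fin B, g (φ u v p))
      ≤ ∑ x : Fin H × Fin W × Fin B, g x := by
    intro u v
    rw [← Finset.sum_image (fun p _ q _ hpq => hφinj u v hpq)]
    exact Finset.sum_le_sum_of_subset_of_nonneg (Finset.subset_univ _)
      (fun x _ _ => hgnn x)
  -- main sum bound
  have main : (∑ p : Fin H' × Fin W' × Fin B,
      (∑ u : Fin K, ∑ v : Fin K, δ (φ u v p) * 𝒲 (u, v)) ^ 2)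
      ≤ (K:ℝ)^2 * (∑ uv : Fin K × Fin K, 𝒲 uv ^ 2) * ∑ x, g x := by
    have step1 : ∀ p : Fin H' × Fin W' × Fin B,
        (∑ u : Fin K, ∑ v : Fin K, δ (φ u v p) * 𝒲 (u, v)) ^ 2
        ≤ (∑ u : Fin K, ∑ v : Fin K, δ (φ u v p) ^ 2)
            * (∑ uv : Fin K × Fin K, 𝒲 uv ^ 2) := by
      intro p
      have h1 : (∑ u : Fin K, ∑ v : Fin K, δ (φ u v p) * 𝒲 (u, v))
          = ∑ uv : Fin K × Fin K, δ (φ uv.1 uv.2 p) * 𝒲 uv := by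
        rw [Fintype.sum_prod_type]
      have h2 : (∑ u : Fin K, ∑ v : Fin K, δ (φ u v p) ^ 2)
          = ∑ uv : Fin K × Fin K, δ (φ uv.1 uv.2 p) ^ 2 := by
        rw [Fintype.sum_prod_type]
      rw [h1, h2]
      exact Finset.sum_mul_sq_le_sq_mul_sq Finset.univ _ _
    calc (∑ p : Fin H' × Fin W' × Fin B,
        (∑ u : Fin K, ∑ v : Fin K, δ (φ u v p) * 𝒲 (u, v)) ^ 2)
        ≤ ∑ p : Fin H' × Fin W' × Fin B,
            (∑ u : Fin K, ∑ v : Fin K, δ (φ u v p) ^ 2)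
              * (∑ uv : Fin K × Fin K, 𝒲 uv ^ 2) :=
          Finset.sum_le_sum fun p _ => step1 p
      _ = (∑ uv : Fin K × Fin K, 𝒲 uv ^ 2) * ∑ u : Fin K, ∑ v : Fin K,
            ∑ p : Fin H' × Fin W' × Fin B, δ (φ u v p) ^ 2 := by
          rw [← Finset.sum_mul, mul_comm]
          congr 1
          rw [Finset.sum_comm]
          congr 1; ext u
          rw [Finset.sum_comm]
      _ ≤ (∑ uv : Fin K × Fin K, 𝒲 uv ^ 2) * ∑ u : Fin K, ∑ v : Fin K,
            (∑ x : Fin H × Fin W × Fin B, g x) := by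
          apply mul_le_mul_of_nonneg_left _ hSW
          apply Finset.sum_le_sum; intro u _
          apply Finset.sum_le_sum; intro v _
          calc (∑ p : Fin H' × Fin W' × Fin B, δ (φ u v p) ^ 2)
              ≤ ∑ p : Fin H' × Fin W' × Fin B, g (φ u v p) :=
                Finset.sum_le_sum fun p _ => hcontr _ _
            _ ≤ ∑ x, g x := count u v
      _ = (K:ℝ)^2 * (∑ uv : Fin K × Fin K, 𝒲 uv ^ 2) * ∑ x, g x := by
          simp [Finset.sum_const]; ring
  have hRHS : ((H * W * B : ℝ) / (H' * W' * B : ℝ)) * (K : ℝ) ^ 2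
          * (∑ uv : Fin K × Fin K, (𝒲 uv) ^ 2)
          * ((1 / (H * W * B : ℝ)) * ∑ x, g x)
      = (1 / (H' * W' * B : ℝ)) * ((K:ℝ)^2 * (∑ uv : Fin K × Fin K, 𝒲 uv ^ 2) * ∑ x, g x) := by
    field_simp
  rw [hRHS]
  exact mul_le_mul_of_nonneg_left main (by positivity)
end

section
/- Let H, W, B, K, H', W', C be positive natural numbers with H' = H − K + 1, W' = W − K + 1, C ≥ 2, and set n = H·W·B and n' = H'·W'·B. Let N : Fin C → (Fin H × Fin W × Fin B → ℝ) be the family of feature channels of a layer, fix i ∈ Fin C, let 𝒲 : Fin K × Fin K → ℝ be a kernel, and let h : ℝ → ℝ satisfy (h(x) − h(y))² ≤ (x − y)² for all x, y ∈ ℝ. Define the valid per-batch convolution (δ ∗ 𝒲)(p₁,p₂,b) = ∑_{u,v∈Fin K} δ(p₁+u, p₂+v, b)·𝒲(u,v) and the channel distance Dist(X, Y) = (1/n) ∑_{h,w,b} (X(h,w,b) − Y(h,w,b))². Then (1/n') ∑_{p₁,p₂,b} ((h∘N(i) − h∘N(j)) ∗ 𝒲)(p₁,p₂,b)² ≤ λ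 · min_{j ∈ Fin C, j ≠ i} Dist(N(i), N(j)), where λ = (n/n')·K²·(∑_{u,v} 𝒲(u,v)²); that is, the distance shift caused by removing channel N(i) and substituting it by its nearest other channel is bounded by λ times the minimal channel distance from N(i) to any other channel of the layer. -/
set_option maxHeartbeats 1000000

open Finset

/-- The channel distance: the mean squared difference of two feature channels. -/
noncomputable def chanDist (H W B : ℕ) (X Y : Fin H × Fin W × Fin B → ℝ) : ℝ :=
  (1 / (H * W * B : ℝ)) * ∑ x : Fin H × Fin W × Fin B, (X x - Y x) ^ 2

/-- **Proposition 2.** The distance shift caused by removing channel `N i` and substituting it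
by its nearest other channel `N j` is bounded by `λ · min_{j' ≠ i} Dist(N i, N j')`, where
`λ = (n/n') · K² · ‖𝒲‖₂²`. -/
theorem dist_shift_le_lambda_min_dist
    (H W B K H' W' C : ℕ) (hH : 0 < H) (hW : 0 < W) (hB : 0 < B) (hK : 0 < K)
    (hH'pos : 0 < H') (hW'pos : 0 < W') (hC2 : 2 ≤ C) (hKH : K ≤ H) (hKW : K ≤ W)
    (hH' : H' = H - K + 1) (hW' : W' = W - K + 1)
    (N : Fin C → (Fin H × Fin W × Fin B → ℝ)) (𝒲 : Fin K × Fin K → ℝ)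
    (h : ℝ → ℝ) (hcontr : ∀ x y : ℝ, (h x - h y) ^ 2 ≤ (x - y) ^ 2)
    (i j : Fin C) (hj : j ≠ i)
    (hj_nearest : ∀ j' : Fin C, j' ≠ i → chanDist H W B (N i) (N j) ≤ chanDist H W B (N i) (N j')) :
    (1 / (H' * W' * B : ℝ)) * ∑ p : Fin H' × Fin W' × Fin B,
        (∑ u : Fin K, ∑ v : Fin K,
          (h (N i (⟨p.1.val + u.val, by have := p.1.isLt; have := u.isLt; omega⟩,
                   ⟨p.2.1.val + v.val, by have := p.2.1.isLt; have := v.isLt; omega⟩, p.2.2))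
            - h (N j (⟨p.1.val + u.val, by have := p.1.isLt; have := u.isLt; omega⟩,
                      ⟨p.2.1.val + v.val, by have := p.2.1.isLt; have := v.isLt; omega⟩, p.2.2)))
            * 𝒲 (u, v)) ^ 2
      ≤ ((H * W * B : ℝ) / (H' * W' * B : ℝ)) * (K : ℝ) ^ 2
          * (∑ uv : Fin K × Fin K, (𝒲 uv) ^ 2)
          * ((Finset.univ.erase i).inf' ⟨j, Finset.mem_erase.mpr ⟨hj, Finset.mem_univ j⟩⟩
              (fun j' => chanDist H W B (N i) (N j'))) := by
  classical
  have hinf : (Finset.univ.erase i).inf' ⟨j, Finset.mem_erase.mpr ⟨hj, Finset.mem_univ j⟩⟩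
      (fun j' => chanDist H W B (N i) (N j')) = chanDist H W B (N i) (N j) := by
    apply le_antisymm
    · exact Finset.inf'_le _ (Finset.mem_erase.mpr ⟨hj, Finset.mem_univ j⟩)
    · exact Finset.le_inf' _ _ (fun j' hj' => hj_nearest j' (Finset.mem_erase.mp hj').1)
  rw [hinf, chanDist]
  set Δ : Fin H × Fin W × Fin B → ℝ := fun x => N i x - N j x with hΔ
  have hn : (0:ℝ) < (H * W * B : ℝ) := by positivity
  have hn' : (0:ℝ) < (H' * W' * B : ℝ) := by positivity
  set W2 : ℝ := ∑ uv : Fin K × Fin K, (𝒲 uv) ^ 2 with hW2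
  set T : ℝ := ∑ x : Fin H × Fin W × Fin B, Δ x ^ 2 with hT
  -- embedding for fixed shift (u,v)
  have hemb : ∀ u v : Fin K, ∑ p : Fin H' × Fin W' × Fin B,
      Δ (⟨p.1.val + u.val, by have := p.1.isLt; have := u.isLt; omega⟩,
         ⟨p.2.1.val + v.val, by have := p.2.1.isLt; have := v.isLt; omega⟩, p.2.2) ^ 2 ≤ T := by
    intro u v
    set e : Fin H' × Fin W' × Fin B → Fin H × Fin W × Fin B := fun p =>
      (⟨p.1.val + u.val, by have := p.1.isLt; have := u.isLt; omega⟩,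
       ⟨p.2.1.val + v.val, by have := p.2.1.isLt; have := v.isLt; omega⟩, p.2.2) with he
    have hinj : ∀ p ∈ (Finset.univ : Finset (Fin H' × Fin W' × Fin B)), ∀ q ∈ Finset.univ,
        e p = e q → p = q := by
      intro p _ q _ hpq
      simp only [he, Prod.ext_iff, Fin.ext_iff] at hpq ⊢
      omega
    calc ∑ p : Fin H' × Fin W' × Fin B, Δ (e p) ^ 2
        = ∑ x ∈ Finset.univ.image e, Δ x ^ 2 := (Finset.sum_image (f := fun x => Δ x ^ 2) hinj).symm
      _ ≤ T := Finset.sum_le_sum_of_subset_of_nonneg (Finset.subset_univ _)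
          (fun x _ _ => by positivity)
  have key : ∑ p : Fin H' × Fin W' × Fin B,
      (∑ u : Fin K, ∑ v : Fin K,
        (h (N i (⟨p.1.val + u.val, by have := p.1.isLt; have := u.isLt; omega⟩,
                 ⟨p.2.1.val + v.val, by have := p.2.1.isLt; have := v.isLt; omega⟩, p.2.2))
          - h (N j (⟨p.1.val + u.val, by have := p.1.isLt; have := u.isLt; omega⟩,
                    ⟨p.2.1.val + v.val, by have := p.2.1.isLt; have := v.isLt; omega⟩, p.2.2)))
          * 𝒲 (u, v)) ^ 2 ≤ W2 * ((K:ℝ)^2 * T) := by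
    have step1 : ∀ p : Fin H' × Fin W' × Fin B,
        (∑ u : Fin K, ∑ v : Fin K,
          (h (N i (⟨p.1.val + u.val, by have := p.1.isLt; have := u.isLt; omega⟩,
                   ⟨p.2.1.val + v.val, by have := p.2.1.isLt; have := v.isLt; omega⟩, p.2.2))
            - h (N j (⟨p.1.val + u.val, by have := p.1.isLt; have := u.isLt; omega⟩,
                      ⟨p.2.1.val + v.val, by have := p.2.1.isLt; have := v.isLt; omega⟩, p.2.2)))
            * 𝒲 (u, v)) ^ 2
        ≤ (∑ u : Fin K, ∑ v : Fin K,
            Δ (⟨p.1.val + u.val, by have := p.1.isLt; have := u.isLt; omega⟩,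
               ⟨p.2.1.val + v.val, by have := p.2.1.isLt; have := v.isLt; omega⟩, p.2.2) ^ 2) * W2 := by
      intro p
      rw [show (∑ u : Fin K, ∑ v : Fin K,
          (h (N i (⟨p.1.val + u.val, by have := p.1.isLt; have := u.isLt; omega⟩,
                   ⟨p.2.1.val + v.val, by have := p.2.1.isLt; have := v.isLt; omega⟩, p.2.2))
            - h (N j (⟨p.1.val + u.val, by have := p.1.isLt; have := u.isLt; omega⟩,
                      ⟨p.2.1.val + v.val, by have := p.2.1.isLt; have := v.isLt; omega⟩, p.2.2)))
            * 𝒲 (u, v))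
          = ∑ uv : Fin K × Fin K,
            (h (N i (⟨p.1.val + uv.1.val, by have := p.1.isLt; have := uv.1.isLt; omega⟩,
                     ⟨p.2.1.val + uv.2.val, by have := p.2.1.isLt; have := uv.2.isLt; omega⟩, p.2.2))
              - h (N j (⟨p.1.val + uv.1.val, by have := p.1.isLt; have := uv.1.isLt; omega⟩,
                        ⟨p.2.1.val + uv.2.val, by have := p.2.1.isLt; have := uv.2.isLt; omega⟩, p.2.2)))
              * 𝒲 uv from (Fintype.sum_prod_type (f := fun uv : Fin K × Fin K =>
            (h (N i (⟨p.1.val + uv.1.val, by have := p.1.isLt; have := uv.1.isLt; omega⟩,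
                     ⟨p.2.1.val + uv.2.val, by have := p.2.1.isLt; have := uv.2.isLt; omega⟩, p.2.2))
              - h (N j (⟨p.1.val + uv.1.val, by have := p.1.isLt; have := uv.1.isLt; omega⟩,
                        ⟨p.2.1.val + uv.2.val, by have := p.2.1.isLt; have := uv.2.isLt; omega⟩, p.2.2)))
              * 𝒲 uv)).symm]
      calc (∑ uv : Fin K × Fin K, _ * 𝒲 uv) ^ 2
          ≤ (∑ uv : Fin K × Fin K,
              (h (N i (⟨p.1.val + uv.1.val, by have := p.1.isLt; have := uv.1.isLt; omega⟩,
                       ⟨p.2.1.val + uv.2.val, by have := p.2.1.isLt; have := uv.2.isLt; omega⟩, p.2.2))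
                - h (N j (⟨p.1.val + uv.1.val, by have := p.1.isLt; have := uv.1.isLt; omega⟩,
                          ⟨p.2.1.val + uv.2.val, by have := p.2.1.isLt; have := uv.2.isLt; omega⟩, p.2.2))) ^ 2)
            * W2 := Finset.sum_mul_sq_le_sq_mul_sq _ _ _
        _ ≤ (∑ uv : Fin K × Fin K,
              Δ (⟨p.1.val + uv.1.val, by have := p.1.isLt; have := uv.1.isLt; omega⟩,
                 ⟨p.2.1.val + uv.2.val, by have := p.2.1.isLt; have := uv.2.isLt; omega⟩, p.2.2) ^ 2) * W2 := by
            apply mul_le_mul_of_nonneg_right _ (by positivity)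
            exact Finset.sum_le_sum (fun uv _ => hcontr _ _)
        _ = (∑ u : Fin K, ∑ v : Fin K,
              Δ (⟨p.1.val + u.val, by have := p.1.isLt; have := u.isLt; omega⟩,
                 ⟨p.2.1.val + v.val, by have := p.2.1.isLt; have := v.isLt; omega⟩, p.2.2) ^ 2) * W2 := by
            rw [Fintype.sum_prod_type]
    calc ∑ p : Fin H' × Fin W' × Fin B, _ ≤ ∑ p : Fin H' × Fin W' × Fin B,
          (∑ u : Fin K, ∑ v : Fin K,
            Δ (⟨p.1.val + u.val, by have := p.1.isLt; have := u.isLt; omega⟩,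
               ⟨p.2.1.val + v.val, by have := p.2.1.isLt; have := v.isLt; omega⟩, p.2.2) ^ 2) * W2 :=
        Finset.sum_le_sum (fun p _ => step1 p)
      _ = (∑ u : Fin K, ∑ v : Fin K, ∑ p : Fin H' × Fin W' × Fin B,
            Δ (⟨p.1.val + u.val, by have := p.1.isLt; have := u.isLt; omega⟩,
               ⟨p.2.1.val + v.val, by have := p.2.1.isLt; have := v.isLt; omega⟩, p.2.2) ^ 2) * W2 := by
          rw [← Finset.sum_mul]
          congr 1
          rw [Finset.sum_comm]
          congr 1
          ext u
          rw [Finset.sum_comm]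
      _ ≤ (∑ _u : Fin K, ∑ _v : Fin K, T) * W2 := by
          apply mul_le_mul_of_nonneg_right _ (by positivity)
          exact Finset.sum_le_sum (fun u _ => Finset.sum_le_sum (fun v _ => hemb u v))
      _ = W2 * ((K:ℝ)^2 * T) := by
          simp [Finset.sum_const]
          ring
  have hrhs : ((H * W * B : ℝ) / (H' * W' * B : ℝ)) * (K : ℝ) ^ 2 * W2
      * ((1 / (H * W * B : ℝ)) * T)
      = (1 / (H' * W' * B : ℝ)) * (W2 * ((K:ℝ)^2 * T)) := by
    field_simp
  calc (1 / (H' * W' * B : ℝ)) * ∑ p : Fin H' × Fin W' × Fin B, _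
      ≤ (1 / (H' * W' * B : ℝ)) * (W2 * ((K:ℝ)^2 * T)) :=
        mul_le_mul_of_nonneg_left key (by positivity)
    _ = ((H * W * B : ℝ) / (H' * W' * B : ℝ)) * (K : ℝ) ^ 2 * W2
        * ((1 / (H * W * B : ℝ)) * T) := hrhs.symm
end
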